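/- arXiv:1903.09016 — 5 statements merged into one kernel-verified Lean document; each statement's English description precedes it below -/
import Mathlib

section
/- For every λ ∈ ℂ and all i, j ∈ ℕ: ∫_ℂ (1/π)·(1 + (z−λ)(conj(z)−conj(λ)))·e^{−|z|²} · conj(z)^i · z^j dA(z) = i!·( δ_{ij}·(2 + |λ|² + i) − δ_{i+1,j}·λ·(i+1) − δ_{i,j+1}·conj(λ) ), where dA is Lebesgue measure on ℂ and δ is the Kronecker delta. -/
open ComplexConjugate Filter MeasureTheory Topology

noncomputable section

/-- Exponential polynomial `e_p(x) = ∑_{k=0}^p x^k/k!`. -/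
def epol (p : ℕ) (x : ℂ) : ℂ := ∑ k ∈ Finset.range (p + 1), x ^ k / (Nat.factorial k : ℂ)

/-- `f_p(x) = (p+1)·e_p(x) - x·e_{p-1}(x)`, with `e_{-1} ≡ 0`. -/
def fpol (p : ℕ) (x : ℂ) : ℂ :=
  ((p : ℂ) + 1) * epol p x - x * (if p = 0 then 0 else epol (p - 1) x)

/-- The polynomial `𝔉_n(x,y,z)`. -/
def Fgoth (n : ℕ) (x y z : ℂ) : ℂ :=
  epol n (x * y) * epol n (x * z) - epol n (x * y * z) * epol n x * (1 - x * (1 - y) * (1 - z))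
    + ((1 - y) * (1 - z) / (Nat.factorial n : ℂ)) *
      (((x * y * z) ^ (n + 1) * epol n x - x ^ (n + 1) * epol n (x * y * z)) / (1 - y * z))

/-- The weight `ω(x,y|λ,μ) = (1/π)(1+(x-λ)(y-μ))e^{-xy}`. -/
def omegaW (x y l m : ℂ) : ℂ :=
  (1 / (Real.pi : ℂ)) * (1 + (x - l) * (y - m)) * Complex.exp (-(x * y))

/-- The finite-`N` reduced kernel `κ^{(N)}(x̄,y|λ,λ̄)`. -/
def kapN (N : ℕ) (xb y l lb : ℂ) : ℂ :=
  (((N : ℂ) + 1) * Fgoth (N + 1) (l * lb) (xb / lb) (y / l)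
      - l * lb * Fgoth N (l * lb) (xb / lb) (y / l)) /
    ((xb - lb) ^ 2 * (y - l) ^ 2 * fpol N (l * lb))

/-- The finite-`N` kernel `K₁₁^{(N)}(x,x̄,y,ȳ|λ,λ̄)`. -/
def K11N (N : ℕ) (x xb y yb l lb : ℂ) : ℂ := omegaW x xb l lb * kapN N xb y l lb

/-- The finite-`N` kernel `K₁₂^{(N)}(x,x̄,y,ȳ|u,ū,v,v̄)`. -/
def K12N (N : ℕ) (x xb y yb u ub v vb : ℂ) : ℂ :=
  omegaW x xb u vb / kapN N ub v u vb *
    (kapN N ub v u vb * kapN N xb y u vb - kapN N ub y u vb * kapN N xb v u vb)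

/-- `Z_N = π^N ∏_{j=1}^N j!`. -/
def Zconst (N : ℕ) : ℂ := (Real.pi : ℂ) ^ N * ∏ j ∈ Finset.Icc 1 N, (Nat.factorial j : ℂ)

/-- Vandermonde product `∏_{0 ≤ j < i < n} (v i - v j)`. -/
def vdm (n : ℕ) (v : ℕ → ℂ) : ℂ := ∏ i ∈ Finset.range n, ∏ j ∈ Finset.range i, (v i - v j)

/-- Pads the `k` conditioned eigenvalues `lam` with the `N-k` integration variables `w`. -/
def pad (N k : ℕ) (lam : Fin k → ℂ) (w : Fin (N - k) → ℂ) (m : ℕ) : ℂ :=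
  if h : m < k then lam ⟨m, h⟩ else if h2 : m - k < N - k then w ⟨m - k, h2⟩ else 0

/-- Conditional diagonal overlap `D₁₁^{(N,k)}`. -/
def D11 (N k : ℕ) (lam : Fin k → ℂ) : ℂ :=
  (Nat.factorial N : ℂ) / (Nat.factorial (N - k) : ℂ) / Zconst N *
    Complex.exp (-(pad N k lam (fun _ => 0) 0 * conj (pad N k lam (fun _ => 0) 0))) *
    ∫ w : Fin (N - k) → ℂ,
      vdm (N - 1) (fun m => pad N k lam w (m + 1)) *
        conj (vdm (N - 1) (fun m => pad N k lam w (m + 1))) *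
        ∏ m ∈ Finset.Icc 1 (N - 1),
          ((1 + (pad N k lam w m - pad N k lam w 0) *
                (conj (pad N k lam w m) - conj (pad N k lam w 0))) *
            Complex.exp (-(pad N k lam w m * conj (pad N k lam w m))))

/-- Conditional off-diagonal overlap `D₁₂^{(N,k)}`. -/
def D12 (N k : ℕ) (lam : Fin k → ℂ) : ℂ :=
  -((Nat.factorial N : ℂ) / (Nat.factorial (N - k) : ℂ) / Zconst N *
    Complex.exp (-(pad N k lam (fun _ => 0) 0 * conj (pad N k lam (fun _ => 0) 0)
        + pad N k lam (fun _ => 0) 1 * conj (pad N k lam (fun _ => 0) 1))) *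
    ∫ w : Fin (N - k) → ℂ,
      vdm (N - 1) (fun m => pad N k lam w (m + 1)) *
        vdm (N - 1) (fun m => conj (pad N k lam w (if m = 0 then 0 else m + 1))) *
        ∏ m ∈ Finset.Icc 2 (N - 1),
          ((1 + (pad N k lam w m - pad N k lam w 0) *
                (conj (pad N k lam w m) - conj (pad N k lam w 1))) *
            Complex.exp (-(pad N k lam w m * conj (pad N k lam w m)))))

/-- `D̃₁₁^{(N,k)}` with the conjugated variables treated as independent. -/
def D11t (N k : ℕ) (lam mu : Fin k → ℂ) : ℂ :=
  (Nat.factorial N : ℂ) / (Nat.factorial (N - k) : ℂ) / Zconst N *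
    Complex.exp (-(pad N k lam (fun _ => 0) 0 * pad N k mu (fun _ => 0) 0)) *
    ∫ w : Fin (N - k) → ℂ,
      vdm (N - 1) (fun m => pad N k lam w (m + 1)) *
        vdm (N - 1) (fun m => pad N k mu (fun i => conj (w i)) (m + 1)) *
        ∏ m ∈ Finset.Icc 1 (N - 1),
          ((1 + (pad N k lam w m - pad N k lam w 0) *
                (pad N k mu (fun i => conj (w i)) m - pad N k mu (fun i => conj (w i)) 0)) *
            Complex.exp (-(pad N k lam w m * pad N k mu (fun i => conj (w i)) m)))

/-- `D̃₁₂^{(N,k)}` with the conjugated variables treated as independent. -/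
def D12t (N k : ℕ) (lam mu : Fin k → ℂ) : ℂ :=
  -((Nat.factorial N : ℂ) / (Nat.factorial (N - k) : ℂ) / Zconst N *
    Complex.exp (-(pad N k lam (fun _ => 0) 0 * pad N k mu (fun _ => 0) 0
        + pad N k lam (fun _ => 0) 1 * pad N k mu (fun _ => 0) 1)) *
    ∫ w : Fin (N - k) → ℂ,
      vdm (N - 1) (fun m => pad N k lam w (m + 1)) *
        vdm (N - 1) (fun m => pad N k mu (fun i => conj (w i)) (if m = 0 then 0 else m + 1)) *
        ∏ m ∈ Finset.Icc 2 (N - 1),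
          ((1 + (pad N k lam w m - pad N k lam w 0) *
                (pad N k mu (fun i => conj (w i)) m - pad N k mu (fun i => conj (w i)) 1)) *
            Complex.exp (-(pad N k lam w m * pad N k mu (fun i => conj (w i)) m))))

/-- Bulk weight `ω^{bulk}`. -/
def omegaBulk (u ub l lb : ℂ) : ℂ :=
  (1 / (Real.pi : ℂ)) * (1 + (u - l) * (ub - lb)) * Complex.exp (-((u - l) * (ub - lb)))

/-- Bulk reduced kernel `κ^{bulk}(ū,v|λ,λ̄) = (1+(w-1)e^w)/w²`, `w = (ū-λ̄)(v-λ)`. -/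
def kapBulk (ub v l lb : ℂ) : ℂ :=
  (1 + ((ub - lb) * (v - l) - 1) * Complex.exp ((ub - lb) * (v - l))) /
    ((ub - lb) * (v - l)) ^ 2

def K11bulk (u ub v vb l lb : ℂ) : ℂ := omegaBulk u ub l lb * kapBulk ub v l lb

def K12bulk (x xb y yb u ub v vb : ℂ) : ℂ :=
  omegaBulk x xb u vb / kapBulk ub v u vb *
    (kapBulk ub v u vb * kapBulk xb y u vb - kapBulk ub y u vb * kapBulk xb v u vb)

/-- `F(a) = (2π)^{-1/2} ∫₀^∞ e^{-(a+t)²/2} dt`, entire continuation of `(1/2)erfc(a/√2)`. -/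
def Ferf (a : ℂ) : ℂ :=
  (1 / (Real.sqrt (2 * Real.pi) : ℂ)) *
    ∫ t in Set.Ioi (0 : ℝ), Complex.exp (-((a + (t : ℂ)) ^ 2) / 2)

/-- The function `H(a,b,c,d,f)` from the edge scaling limit. -/
def Hedge (a b c d f : ℂ) : ℂ :=
  -(Real.sqrt (2 * Real.pi) : ℂ) /
      (1 - (Real.sqrt (2 * Real.pi) : ℂ) * a * Complex.exp (a ^ 2 / 2) * Ferf a) *
    deriv (fun x : ℂ =>
      Complex.exp ((a + x) ^ 2 / 2) *
        (Complex.exp (-f) * Ferf (b + x) * Ferf (c + x) - Ferf (d + x) * Ferf (a + x) +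
          f * Ferf d * Ferf (a + x))) 0

def omegaEdge (x xb l lb : ℂ) : ℂ :=
  (1 / (Real.pi : ℂ)) * (1 + (x - l) * (xb - lb)) * Complex.exp (-(x * xb))

def kapEdge (xb y l lb : ℂ) : ℂ :=
  Complex.exp (xb * y) * Hedge (l + lb) (l + xb) (y + lb) (y + xb) ((l - y) * (lb - xb)) /
    ((l - y) ^ 2 * (lb - xb) ^ 2)

def K11edge (x xb y yb l lb : ℂ) : ℂ := omegaEdge x xb l lb * kapEdge xb y l lb

def K12edge (x xb y yb u ub v vb : ℂ) : ℂ :=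
  omegaEdge x xb u vb / kapEdge ub v u vb *
    (kapEdge ub v u vb * kapEdge xb y u vb - kapEdge ub y u vb * kapEdge xb v u vb)

/-- Index embedding `Fin (k-1) → Fin k`, `i ↦ i+1`. -/
def sh1 {k : ℕ} (i : Fin (k - 1)) : Fin k := ⟨i.val + 1, by have := i.isLt; omega⟩

/-- Index embedding `Fin (k-2) → Fin k`, `i ↦ i+2`. -/
def sh2 {k : ℕ} (i : Fin (k - 2)) : Fin k := ⟨i.val + 2, by have := i.isLt; omega⟩

def ev0 {k : ℕ} (lam : Fin k → ℂ) : ℂ := if h : 0 < k then lam ⟨0, h⟩ else 0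

def ev1 {k : ℕ} (lam : Fin k → ℂ) : ℂ := if h : 1 < k then lam ⟨1, h⟩ else 0

/-- The edge overlap function `D₁₁^{edge,k}`. -/
def D11edgeF (k : ℕ) (lam : Fin k → ℂ) : ℂ :=
  (1 / (Real.sqrt (2 * Real.pi ^ 3) : ℂ)) *
    (Complex.exp (-((ev0 lam + conj (ev0 lam)) ^ 2 / 2)) -
      (Real.sqrt (2 * Real.pi) : ℂ) * (ev0 lam + conj (ev0 lam)) *
        Ferf (ev0 lam + conj (ev0 lam))) *
    Matrix.det (Matrix.of fun i j : Fin (k - 1) =>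
      K11edge (lam (sh1 i)) (conj (lam (sh1 i))) (lam (sh1 j)) (conj (lam (sh1 j)))
        (ev0 lam) (conj (ev0 lam)))

/-- The bulk overlap function `D₁₁^{bulk,k}`. -/
def D11bulkF (k : ℕ) (lam : Fin k → ℂ) : ℂ :=
  (1 / (Real.pi : ℂ)) *
    Matrix.det (Matrix.of fun i j : Fin (k - 1) =>
      K11bulk (lam (sh1 i)) (conj (lam (sh1 i))) (lam (sh1 j)) (conj (lam (sh1 j)))
        (ev0 lam) (conj (ev0 lam)))

/-- The bulk off-diagonal overlap function `D₁₂^{bulk,k}`. -/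
def D12bulkF (k : ℕ) (lam : Fin k → ℂ) : ℂ :=
  -(1 / (Real.pi : ℂ) ^ 2) * kapBulk (conj (ev0 lam)) (ev1 lam) (ev0 lam) (conj (ev1 lam)) *
    Matrix.det (Matrix.of fun i j : Fin (k - 2) =>
      K12bulk (lam (sh2 i)) (conj (lam (sh2 i))) (lam (sh2 j)) (conj (lam (sh2 j)))
        (ev0 lam) (conj (ev0 lam)) (ev1 lam) (conj (ev1 lam)))

/-- The first-order differential operator `𝔇_m = 1 - (λ_m-λ₁)(μ_m-μ₁) - (λ_m-λ₁)∂/∂λ_m`. -/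
def Dop {k : ℕ} (m : Fin k) (g : (Fin k → ℂ) → (Fin k → ℂ) → ℂ)
    (lam mu : Fin k → ℂ) : ℂ :=
  (1 - (lam m - lam ⟨0, m.pos⟩) * (mu m - mu ⟨0, m.pos⟩)) * g lam mu -
    (lam m - lam ⟨0, m.pos⟩) * deriv (fun t => g (Function.update lam m t) mu) (lam m)

/-- Holomorphic extension `ρ̃` of the bulk `k`-point Ginibre correlation function. -/
def rhoT (k : ℕ) (lam mu : Fin k → ℂ) : ℂ :=
  ((Real.pi : ℂ) ^ k)⁻¹ * Complex.exp (-(∑ m, lam m * mu m)) *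
    Matrix.det (Matrix.of fun i j : Fin k => Complex.exp (mu i * lam j))

/-- Holomorphic extension `D̃₁₁^{bulk,k}` of the bulk conditional diagonal overlap. -/
def D11tBulk (k : ℕ) (lam mu : Fin k → ℂ) : ℂ :=
  ((Real.pi : ℂ) ^ k)⁻¹ *
    (∏ i : Fin (k - 1),
      (1 + (lam (sh1 i) - ev0 lam) * (mu (sh1 i) - ev0 mu)) /
          ((lam (sh1 i) - ev0 lam) ^ 2 * (mu (sh1 i) - ev0 mu) ^ 2) *
        Complex.exp (-((lam (sh1 i) - ev0 lam) * (mu (sh1 i) - ev0 mu)))) *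
    Matrix.det (Matrix.of fun m n : Fin (k - 1) =>
      1 - (1 - (mu (sh1 m) - ev0 mu) * (lam (sh1 n) - ev0 lam)) *
        Complex.exp ((mu (sh1 m) - ev0 mu) * (lam (sh1 n) - ev0 lam)))

/-- Monic bi-orthogonal polynomials `P_k(z)` for the weight `ω(·,·|λ,λ̄)`. -/
def Ppoly (l : ℂ) (k : ℕ) (z : ℂ) : ℂ :=
  ∑ m ∈ Finset.range (k + 1), l ^ (k - m) * (fpol m (l * conj l) / fpol k (l * conj l)) * z ^ m

/-- The reduced kernel `G^{(N)}(x,y,z)` as a double sum. -/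
def Gker (N : ℕ) (x y z : ℂ) : ℂ :=
  ∑ m ∈ Finset.range (N + 1), ∑ n ∈ Finset.range (N + 1),
    fpol m x * fpol n x * y ^ m * z ^ n *
      ∑ k ∈ Finset.Icc (max m n) N,
        x ^ k / ((Nat.factorial (k + 1) : ℂ) * fpol k x * fpol (k + 1) x)

end

section auxMoments
open Set Real

lemma integ_mono (a b : ℕ) :
    Integrable (fun z : ℂ => conj z ^ a * z ^ b * Complex.exp (-(z * conj z))) := by
  have h0 : Integrable (fun v : ℂ => Real.exp (-(1/2) * ‖v‖^2)) := by
    have h := (GaussianFourier.integrable_cexp_neg_mul_sq_norm_add (V := ℂ) (b := 1/2)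
      (by norm_num) 0 (0:ℂ)).norm
    refine h.congr ?_
    filter_upwards with v
    simp [Complex.norm_exp]
    rw [← Complex.ofReal_pow, Complex.ofReal_re]
  have hg := h0.const_mul (((a+b).factorial : ℝ) * Real.exp 1)
  refine Integrable.mono' hg ?_ ?_
  · exact (((Complex.continuous_conj.pow a).mul (continuous_pow b)).mul
      (Complex.continuous_exp.comp ((continuous_id.mul Complex.continuous_conj).neg))).aestronglyMeasurable
  filter_upwards with z
  have hz : (0:ℝ) ≤ ‖z‖ := norm_nonneg z
  have h1 : z * conj z = ((‖z‖^2 : ℝ) : ℂ) := by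
    rw [Complex.mul_conj]; norm_cast; rw [Complex.normSq_eq_norm_sq]
  rw [norm_mul, norm_mul, h1]
  have h2 : ‖Complex.exp (-((‖z‖^2 : ℝ) : ℂ))‖ = Real.exp (-(‖z‖^2)) := by
    simp [Complex.norm_exp, ← Complex.ofReal_pow]
  rw [h2, norm_pow, norm_pow, RCLike.norm_conj]
  set x := ‖z‖
  have hp : x ^ (a+b) ≤ (a+b).factorial * Real.exp x := by
    have h3 := Real.pow_div_factorial_le_exp x hz (a+b)
    have hf : (0:ℝ) < (a+b).factorial := by positivity
    rw [div_le_iff₀ hf] at h3; linarith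
  calc x^a * x^b * Real.exp (-(x^2)) = x^(a+b) * Real.exp (-(x^2)) := by rw [pow_add]
    _ ≤ ((a+b).factorial * Real.exp x) * Real.exp (-(x^2)) := by
        apply mul_le_mul_of_nonneg_right hp (Real.exp_nonneg _)
    _ ≤ ((a+b).factorial * Real.exp 1) * Real.exp (-(1/2) * x^2) := by
        rw [mul_assoc, mul_assoc, ← Real.exp_add, ← Real.exp_add]
        apply mul_le_mul_of_nonneg_left (Real.exp_le_exp.2 (by nlinarith)) (by positivity)

lemma moment (a b : ℕ) :
    ∫ z : ℂ, conj z ^ a * z ^ b * Complex.exp (-(z * conj z)) =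
      if a = b then (Real.pi : ℂ) * a.factorial else 0 := by
  rw [← Complex.integral_comp_polarCoord_symm]
  have hz : ∀ r θ : ℝ,
      (r : ℝ) • (conj (Complex.polarCoord.symm (r, θ)) ^ a * Complex.polarCoord.symm (r, θ) ^ b *
        Complex.exp (-(Complex.polarCoord.symm (r, θ) * conj (Complex.polarCoord.symm (r, θ))))) =
      ((r : ℂ) ^ (a + b + 1) * Complex.exp (-(r : ℂ) ^ 2)) *
        Complex.exp (((b : ℂ) - (a : ℂ)) * θ * Complex.I) := by
    intro r θ
    have hsymm : Complex.polarCoord.symm (r, θ) = (r : ℂ) * Complex.exp (θ * Complex.I) := by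
      rw [Complex.polarCoord_symm_apply, Complex.exp_mul_I]
      push_cast
      ring
    have hconj : conj ((r : ℂ) * Complex.exp ((θ : ℂ) * Complex.I)) =
        (r : ℂ) * Complex.exp (-((θ : ℂ) * Complex.I)) := by
      rw [map_mul, Complex.conj_ofReal, ← Complex.exp_conj]
      congr 1
      simp [Complex.conj_I]
    rw [hsymm, hconj]
    have hzz : ((r : ℂ) * Complex.exp ((θ:ℂ) * Complex.I)) *
        ((r : ℂ) * Complex.exp (-((θ:ℂ) * Complex.I))) = (r : ℂ) ^ 2 := by
      rw [mul_mul_mul_comm, ← Complex.exp_add]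
      simp [sq]
    rw [hzz, mul_pow, mul_pow, ← Complex.exp_nat_mul, ← Complex.exp_nat_mul, Complex.real_smul]
    calc (r:ℂ) * ((r:ℂ)^a * Complex.exp (a * -((θ:ℂ) * Complex.I)) *
          ((r:ℂ)^b * Complex.exp (b * ((θ:ℂ) * Complex.I))) * Complex.exp (-(r:ℂ)^2))
        = ((r:ℂ)^(a+b+1) * Complex.exp (-(r:ℂ)^2)) *
          (Complex.exp ((a:ℂ) * -((θ:ℂ) * Complex.I)) * Complex.exp ((b:ℂ) * ((θ:ℂ) * Complex.I))) := by
          ring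
      _ = _ := by rw [← Complex.exp_add]; congr 1; ring
  calc (∫ p in polarCoord.target, p.1 • (conj (Complex.polarCoord.symm p) ^ a *
          Complex.polarCoord.symm p ^ b *
          Complex.exp (-(Complex.polarCoord.symm p * conj (Complex.polarCoord.symm p)))))
      = ∫ p in Ioi (0:ℝ) ×ˢ Ioo (-π) π, ((p.1 : ℂ) ^ (a + b + 1) * Complex.exp (-(p.1 : ℂ) ^ 2)) *
          Complex.exp (((b : ℂ) - (a : ℂ)) * p.2 * Complex.I) := by
        rw [polarCoord_target]
        exact setIntegral_congr_fun (measurableSet_Ioi.prod measurableSet_Ioo)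
          (fun p _ => hz p.1 p.2)
    _ = (∫ r in Ioi (0:ℝ), (r : ℂ) ^ (a + b + 1) * Complex.exp (-(r : ℂ) ^ 2)) *
          ∫ θ in Ioo (-π) π, Complex.exp (((b : ℂ) - (a : ℂ)) * θ * Complex.I) := by
        rw [Measure.volume_eq_prod]
        exact setIntegral_prod_mul
          (fun r : ℝ => (r : ℂ) ^ (a + b + 1) * Complex.exp (-(r : ℂ) ^ 2))
          (fun θ : ℝ => Complex.exp (((b : ℂ) - (a : ℂ)) * θ * Complex.I)) _ _
    _ = if a = b then (Real.pi : ℂ) * a.factorial else 0 := by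
        by_cases hab : a = b
        · subst hab
          simp only [sub_self, zero_mul, Complex.exp_zero, if_pos rfl]
          rw [setIntegral_const]
          have hreal : ∫ x in Ioi (0:ℝ), x ^ (a + a + 1) * rexp (-x ^ 2) =
              1/2 * Real.Gamma ((a : ℝ) + 1) := by
            have h1 := integral_rpow_mul_exp_neg_rpow (p := 2) (q := ((a + a + 1 : ℕ) : ℝ))
              (by norm_num) (neg_one_lt_zero.trans_le (by positivity))
            rw [show (((a + a + 1 : ℕ) : ℝ) + 1) / 2 = (a : ℝ) + 1 by push_cast; ring] at h1
            rw [← h1]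
            refine setIntegral_congr_fun measurableSet_Ioi (fun x hx => ?_)
            rw [Real.rpow_natCast, show (2:ℝ) = ((2:ℕ):ℝ) by norm_num, Real.rpow_natCast]
          have hR : (∫ r in Ioi (0:ℝ), (r : ℂ) ^ (a + a + 1) * Complex.exp (-(r : ℂ) ^ 2)) =
              ((1/2 * Real.Gamma ((a : ℝ) + 1) : ℝ) : ℂ) := by
            have hcast : ∀ r : ℝ, (r : ℂ) ^ (a + a + 1) * Complex.exp (-(r : ℂ) ^ 2) =
                ((r ^ (a + a + 1) * Real.exp (-r ^ 2) : ℝ) : ℂ) := by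
              intro r; push_cast [Complex.ofReal_exp]; ring
            simp_rw [hcast]
            rw [show (∫ r in Ioi (0:ℝ), ((r ^ (a + a + 1) * rexp (-r ^ 2) : ℝ) : ℂ)) =
              ((∫ r in Ioi (0:ℝ), r ^ (a + a + 1) * rexp (-r ^ 2) : ℝ) : ℂ) from integral_ofReal]
            rw [hreal]
          rw [hR, Real.Gamma_nat_eq_factorial, Real.volume_real_Ioo_of_le (by linarith [Real.pi_pos])]
          rw [Complex.real_smul]
          push_cast
          ring
        · rw [if_neg hab]
          have hΘ : (∫ θ in Ioo (-π) π, Complex.exp (((b : ℂ) - (a : ℂ)) * θ * Complex.I)) = 0 := by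
            set n : ℤ := (b : ℤ) - (a : ℤ) with hn
            have hn0 : n ≠ 0 := sub_ne_zero.mpr (by exact_mod_cast Ne.symm hab)
            have hc : ((n : ℂ)) * Complex.I ≠ 0 := by
              simp [Int.cast_eq_zero, hn0, Complex.I_ne_zero]
            have hrw : ∀ θ : ℝ, ((b : ℂ) - (a : ℂ)) * θ * Complex.I = ((n:ℂ) * Complex.I) * θ := by
              intro θ; push_cast [hn]; ring
            simp_rw [hrw]
            rw [← integral_Ioc_eq_integral_Ioo,
              ← intervalIntegral.integral_of_le (by linarith [Real.pi_pos]),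
              integral_exp_mul_complex hc]
            have h1 : (n : ℂ) * Complex.I * π = (n : ℤ) * ((π : ℂ) * Complex.I) := by push_cast; ring
            have h2 : (n : ℂ) * Complex.I * ((-π : ℝ) : ℂ) = ((-n : ℤ) : ℂ) * ((π : ℂ) * Complex.I) := by
              push_cast; ring
            rw [h1, h2, Complex.exp_int_mul, Complex.exp_int_mul, Complex.exp_pi_mul_I]
            have : ((-1 : ℂ)) ^ (-n) = (-1 : ℂ) ^ n := by
              rcases Int.even_or_odd n with h | h
              · rw [h.neg_one_zpow, (h.neg).neg_one_zpow]
              · rw [h.neg_one_zpow, (h.neg).neg_one_zpow]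
            rw [this, sub_self, zero_div]
          rw [hΘ, mul_zero]

end auxMoments

/-- the moment matrix of the weight `ω(z,z̄|λ,λ̄)` is tridiagonal. -/
theorem statement14 (l : ℂ) (i j : ℕ) :
    ∫ z : ℂ, (1 / (Real.pi : ℂ)) * (1 + (z - l) * (conj z - conj l)) *
        Complex.exp (-(z * conj z)) * (conj z) ^ i * z ^ j =
      (Nat.factorial i : ℂ) *
        ((if i = j then 1 else 0) * (2 + l * conj l + (i : ℂ)) -
          (if i + 1 = j then 1 else 0) * l * ((i : ℂ) + 1) -
          (if i = j + 1 then 1 else 0) * conj l) := by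
  have hπ : (Real.pi : ℂ) ≠ 0 := by
    exact_mod_cast Complex.ofReal_ne_zero.mpr Real.pi_ne_zero
  have hfun : (fun z : ℂ => (1 / (Real.pi : ℂ)) * (1 + (z - l) * (conj z - conj l)) *
        Complex.exp (-(z * conj z)) * (conj z) ^ i * z ^ j) =
      fun z : ℂ => (1 / (Real.pi : ℂ)) *
        ((1 + l * conj l) * (conj z ^ i * z ^ j * Complex.exp (-(z * conj z))) +
          conj z ^ (i+1) * z ^ (j+1) * Complex.exp (-(z * conj z)) -
          l * (conj z ^ (i+1) * z ^ j * Complex.exp (-(z * conj z))) -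
          conj l * (conj z ^ i * z ^ (j+1) * Complex.exp (-(z * conj z)))) := by
    funext z
    ring
  rw [hfun, integral_const_mul, integral_sub, integral_sub, integral_add, integral_const_mul,
    integral_const_mul, integral_const_mul, moment, moment, moment, moment]
  · simp only [Nat.add_right_cancel_iff]
    by_cases h1 : i = j
    · subst h1
      have h2 : ¬ (i + 1 = i) := by omega
      have h3 : ¬ (i = i + 1) := by omega
      simp only [if_pos rfl, if_neg h2, if_neg h3, mul_zero, sub_zero]
      rw [Nat.factorial_succ]
      push_cast
      field_simp
      ring
    · by_cases h2 : i + 1 = j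
      · have h3 : ¬ (i = j + 1) := by omega
        simp only [if_neg h1, if_pos h2, if_neg h3, mul_zero, sub_zero, zero_mul, zero_add,
          mul_one, zero_sub]
        rw [Nat.factorial_succ]
        push_cast
        field_simp
      · by_cases h3 : i = j + 1
        · simp only [if_neg h1, if_neg h2, if_pos h3, mul_zero, zero_mul, zero_sub, sub_zero,
            zero_add]
          field_simp
        · simp [if_neg h1, if_neg h2, if_neg h3]
  · exact (integ_mono i j).const_mul _
  · exact integ_mono (i+1) (j+1)
  · exact ((integ_mono i j).const_mul _).add (integ_mono (i+1) (j+1))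
  · exact (integ_mono (i+1) j).const_mul _
  · exact (((integ_mono i j).const_mul _).add (integ_mono (i+1) (j+1))).sub
      ((integ_mono (i+1) j).const_mul _)
  · exact (integ_mono i (j+1)).const_mul _
end

section
/- Let λ ∈ ℂ and set x = |λ|² (so f_p(x) > 0 for all p). For k ∈ ℕ define the monic polynomial P_k(z) = Σ_{m=0}^k λ^{k−m}·( f_m(x)/f_k(x) )·z^m. Then for all i, j ∈ ℕ: ∫_ℂ (1/π)·(1 + (z−λ)(conj(z)−conj(λ)))·e^{−|z|²} · conj(P_i(z)) · P_j(z) dA(z) = δ_{ij} · (i+1)! · f_{i+1}(x)/f_i(x), where dA is Lebesgue measure on ℂ; i.e. the P_k are the monic polynomials bi-orthogonal in the complex plane with respect to this weight. -/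
open ComplexConjugate Filter MeasureTheory Topology

----------------------------------------------------------------------
-- Auxiliary machinery for statement15
----------------------------------------------------------------------

open MeasureTheory Real Set

namespace S15

noncomputable section

/-- basic Gaussian monomial -/
def gfun (a b : ℕ) (z : ℂ) : ℂ := (conj z) ^ a * z ^ b * Complex.exp (-(z * conj z))

def qc (l : ℂ) (i a : ℕ) : ℂ := (conj l) ^ (i - a) * (fpol a (l * conj l) / fpol i (l * conj l))

def pc (l : ℂ) (j b : ℕ) : ℂ := l ^ (j - b) * (fpol b (l * conj l) / fpol j (l * conj l))

def tW (l : ℂ) (i j a : ℕ) : ℂ := (conj l) ^ (i - a) * l ^ (j - a)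

def Aq (l : ℂ) (a : ℕ) : ℂ :=
  (a.factorial : ℂ) * ((l * conj l) + a + 2) * fpol a (l * conj l) * fpol a (l * conj l)

def Bq (l : ℂ) (a : ℕ) : ℂ :=
  ((a+1).factorial : ℂ) * fpol a (l * conj l) * fpol (a+1) (l * conj l)

end

lemma ang (k : ℤ) (hk : k ≠ 0) :
    ∫ θ in Ioo (-π) π, Complex.exp ((k : ℂ) * θ * Complex.I) = 0 := by
  rw [← integral_Ioc_eq_integral_Ioo,
    ← intervalIntegral.integral_of_le (by linarith [pi_pos] : -π ≤ π)]
  have hc : ((k : ℂ)) * Complex.I ≠ 0 :=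
    mul_ne_zero (Int.cast_ne_zero.2 hk) Complex.I_ne_zero
  simp_rw [show ∀ x : ℝ, (k : ℂ) * x * Complex.I = ((k : ℂ) * Complex.I) * x from
    fun x => by ring]
  rw [integral_exp_mul_complex hc,
    show ((k : ℂ) * Complex.I) * (π : ℝ) = ((k : ℂ) * Complex.I) * ((-π : ℝ)) +
      (k : ℤ) * (2 * (π : ℝ) * Complex.I) by push_cast; ring,
    Complex.exp_add, Complex.exp_int_mul_two_pi_mul_I, mul_one, sub_self, zero_div]

lemma ang0 : ∫ _θ in Ioo (-π) π, (1 : ℂ) = 2 * (π : ℝ) := by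
  simp [Real.volume_Ioo]
  rw [max_eq_left (by positivity)]
  push_cast; ring

lemma rad (n : ℕ) : ∫ r in Ioi (0 : ℝ), r ^ n * rexp (-r ^ 2)
    = (1 / 2) * Real.Gamma ((n + 1) / 2) := by
  rw [← integral_rpow_mul_exp_neg_rpow (by norm_num)
    (by have : (0:ℝ) ≤ n := Nat.cast_nonneg n; linarith : (-1:ℝ) < (n:ℝ))]
  refine setIntegral_congr_fun measurableSet_Ioi fun x hx => ?_
  rw [← Real.rpow_natCast x n, ← Real.rpow_natCast x 2]
  norm_num

lemma moment (a b : ℕ) :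
    ∫ z : ℂ, gfun a b z = if a = b then (π : ℂ) * (Nat.factorial a : ℂ) else 0 := by
  simp only [gfun]
  rw [← Complex.integral_comp_polarCoord_symm]
  have key : ∀ p ∈ polarCoord.target,
      p.1 • ((conj (Complex.polarCoord.symm p)) ^ a * (Complex.polarCoord.symm p) ^ b *
        Complex.exp (-(Complex.polarCoord.symm p * conj (Complex.polarCoord.symm p)))) =
      ((p.1 : ℂ) ^ (a + b + 1) * Complex.exp (-(p.1 : ℂ) ^ 2)) *
        Complex.exp ((((b : ℝ) - (a : ℝ)) : ℂ) * p.2 * Complex.I) := by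
    intro p hp
    have hz : Complex.polarCoord.symm p = (p.1 : ℂ) * Complex.exp (p.2 * Complex.I) := by
      rw [Complex.polarCoord_symm_apply, Complex.exp_mul_I]; push_cast; ring
    have hcz : conj (Complex.polarCoord.symm p) =
        (p.1 : ℂ) * Complex.exp (-(p.2 * Complex.I)) := by
      rw [hz, map_mul, ← Complex.exp_conj]
      simp [Complex.conj_ofReal]
    rw [hcz, hz]
    rw [mul_pow, mul_pow, ← Complex.exp_nat_mul, ← Complex.exp_nat_mul]
    rw [Complex.real_smul]
    rw [show ((p.1:ℂ) * Complex.exp (↑p.2 * Complex.I)) * ((p.1:ℂ) *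
      Complex.exp (-(↑p.2 * Complex.I))) = (p.1:ℂ)^2 *
        (Complex.exp (↑p.2 * Complex.I) * Complex.exp (-(↑p.2 * Complex.I))) by ring,
      ← Complex.exp_add, add_neg_cancel, Complex.exp_zero, mul_one]
    have e1 : Complex.exp ((a:ℂ) * -((p.2:ℂ) * Complex.I)) *
        Complex.exp ((b:ℂ) * ((p.2:ℂ) * Complex.I)) =
        Complex.exp ((((b : ℝ) - (a : ℝ)) : ℂ) * p.2 * Complex.I) := by
      rw [← Complex.exp_add]; congr 1; push_cast; ring
    rw [← e1]; ring
  rw [setIntegral_congr_fun (Complex.polarCoord_target ▸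
    (isOpen_Ioi.prod isOpen_Ioo).measurableSet) key]
  rw [polarCoord_target, Measure.volume_eq_prod, ← Measure.prod_restrict,
    integral_prod_mul (f := fun r : ℝ => (r : ℂ) ^ (a + b + 1) * Complex.exp (-(r:ℂ) ^ 2))
      (g := fun θ : ℝ => Complex.exp ((((b : ℝ) - (a : ℝ)) : ℂ) * θ * Complex.I))]
  have hrad : (∫ r in Ioi (0:ℝ), (r : ℂ) ^ (a + b + 1) * Complex.exp (-(r:ℂ) ^ 2)) =
      (((1 / 2) * Real.Gamma ((((a + b + 1 : ℕ) : ℝ) + 1) / 2) : ℝ) : ℂ) := by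
    rw [← rad (a + b + 1),
      show (∫ r in Ioi (0:ℝ), (r:ℂ) ^ (a+b+1) * Complex.exp (-(r:ℂ) ^ 2)) =
        ∫ r in Ioi (0:ℝ), ((r ^ (a+b+1) * rexp (-r ^ 2) : ℝ) : ℂ) from
        setIntegral_congr_fun measurableSet_Ioi fun x _ => by
          push_cast [Complex.ofReal_exp]; ring]
    exact integral_ofReal
  rw [hrad]
  by_cases hab : a = b
  · subst hab
    have : ∀ θ : ℝ, Complex.exp ((((a : ℝ) - (a : ℝ)) : ℂ) * θ * Complex.I) = 1 := by
      intro θ; simp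
    simp_rw [this]
    rw [ang0]
    have h2 : (((a + a + 1 : ℕ) : ℝ) + 1) / 2 = ((a : ℕ) : ℝ) + 1 := by push_cast; ring
    rw [h2, Real.Gamma_nat_eq_factorial]
    simp only [if_true, eq_self_iff_true, ite_true]
    push_cast
    ring
  · have hk : ((b : ℤ) - (a : ℤ)) ≠ 0 := by
      intro h; apply hab; omega
    have : ∀ θ : ℝ, Complex.exp ((((b : ℝ) - (a : ℝ)) : ℂ) * θ * Complex.I) =
        Complex.exp ((((b : ℤ) - (a : ℤ) : ℤ) : ℂ) * θ * Complex.I) := by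
      intro θ; push_cast; ring_nf
    simp_rw [this]
    rw [ang _ hk, mul_zero, if_neg hab]

lemma gauss_int : Integrable (fun z : ℂ => rexp (-Complex.normSq z / 2)) := by
  have hF : Integrable (fun p : ℝ × ℝ => rexp (-(1/2) * p.1 ^ 2) * rexp (-(1/2) * p.2 ^ 2)) := by
    rw [Measure.volume_eq_prod]
    exact (integrable_exp_neg_mul_sq (by norm_num)).mul_prod
      (integrable_exp_neg_mul_sq (by norm_num))
  have := (Complex.volume_preserving_equiv_real_prod.integrable_comp_emb
    Complex.measurableEquivRealProd.measurableEmbedding).2 hF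
  refine this.congr (Filter.Eventually.of_forall fun z => ?_)
  show rexp _ * rexp _ = _
  rw [← Real.exp_add, Complex.measurableEquivRealProd_apply]
  congr 1
  rw [Complex.normSq_apply]
  ring

lemma pow_le_exp {t : ℝ} (ht : 0 ≤ t) (n : ℕ) : t ^ n ≤ n.factorial * rexp t := by
  have h1 : t ^ n / n.factorial ≤ ∑ k ∈ Finset.range (n + 1), t ^ k / k.factorial :=
    Finset.single_le_sum (f := fun k => t ^ k / k.factorial)
      (fun k _ => by positivity) (Finset.self_mem_range_succ n)
  have h2 := Real.sum_le_exp_of_nonneg ht (n + 1)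
  have h3 : (0:ℝ) < n.factorial := by exact_mod_cast n.factorial_pos
  rw [div_le_iff₀ h3] at h1
  calc t ^ n ≤ (∑ k ∈ Finset.range (n + 1), t ^ k / k.factorial) * n.factorial := h1
    _ ≤ rexp t * n.factorial := by gcongr
    _ = n.factorial * rexp t := by ring

lemma integ_g (a b : ℕ) : Integrable (fun z : ℂ => gfun a b z) := by
  refine ((gauss_int.const_mul (((a+b).factorial : ℝ) * rexp (1/2))).mono'
    ?_ (Filter.Eventually.of_forall fun z => ?_))
  · have hc : Continuous fun z : ℂ => conj z := Complex.continuous_conj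
    exact (((hc.pow a).mul (continuous_pow b)).mul
      (Complex.continuous_exp.comp ((continuous_id.mul hc).neg))).aestronglyMeasurable
  · have h1 : ‖(conj z) ^ a * z ^ b * Complex.exp (-(z * conj z))‖
        = ‖z‖ ^ (a + b) * rexp (-Complex.normSq z) := by
      rw [norm_mul, norm_mul, norm_pow, norm_pow, RCLike.norm_conj, ← pow_add,
        show ‖Complex.exp (-(z * conj z))‖ = rexp ((-(z * conj z)).re) from
          Complex.norm_exp _]
      rw [Complex.mul_conj]
      norm_num
    rw [show gfun a b z = (conj z) ^ a * z ^ b * Complex.exp (-(z * conj z)) from rfl, h1]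
    have hn : Complex.normSq z = ‖z‖ ^ 2 := by
      rw [Complex.normSq_eq_norm_sq]
    set t := ‖z‖ with hT
    have ht : 0 ≤ t := norm_nonneg z
    have h2 : t ^ (a+b) ≤ (a+b).factorial * rexp t := pow_le_exp ht (a+b)
    have h3 : rexp t * rexp (-(t^2)) ≤ rexp (1/2) * rexp (-(t^2)/2) := by
      rw [← Real.exp_add, ← Real.exp_add]
      apply Real.exp_le_exp.2
      nlinarith [sq_nonneg (t - 1)]
    rw [hn]
    calc t ^ (a+b) * rexp (-(t^2)) ≤ ((a+b).factorial * rexp t) * rexp (-(t^2)) := by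
          apply mul_le_mul_of_nonneg_right h2 (Real.exp_nonneg _)
      _ = (a+b).factorial * (rexp t * rexp (-(t^2))) := by ring
      _ ≤ (a+b).factorial * (rexp (1/2) * rexp (-(t^2)/2)) := by
          apply mul_le_mul_of_nonneg_left h3 (by positivity)
      _ = (a+b).factorial * rexp (1/2) * rexp (-(t^2)/2) := by ring

----------------------------------------------------------------------
-- algebraic lemmas on epol/fpol
----------------------------------------------------------------------

lemma epol_succ (p : ℕ) (x : ℂ) :
    epol (p + 1) x = epol p x + x ^ (p + 1) / ((p+1).factorial : ℂ) :=
  Finset.sum_range_succ _ _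

lemma fpol_eq_epol (p : ℕ) (x : ℂ) :
    fpol p x = ((p : ℂ) + 1 - x) * epol p x + x ^ (p + 1) / (p.factorial : ℂ) := by
  cases p with
  | zero => simp [fpol, epol]
  | succ q =>
    rw [fpol, if_neg (Nat.succ_ne_zero q), Nat.succ_sub_one, epol_succ]
    push_cast
    ring

lemma aux_sum (n : ℕ) (x : ℂ) :
    ∑ k ∈ Finset.range (n + 1), (k : ℂ) * x ^ k / (k.factorial : ℂ)
      = x * ∑ k ∈ Finset.range n, x ^ k / (k.factorial : ℂ) := by
  rw [Finset.sum_range_succ', Finset.mul_sum]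
  simp only [Nat.cast_zero, zero_mul, pow_zero, zero_div, add_zero]
  refine Finset.sum_congr rfl fun k _ => ?_
  have h : ((k+1).factorial : ℂ) = ((k:ℂ) + 1) * (k.factorial : ℂ) := by
    push_cast [Nat.factorial_succ]; ring
  have h2 : ((k:ℂ) + 1) ≠ 0 := Nat.cast_add_one_ne_zero k
  have h3 : (k.factorial : ℂ) ≠ 0 := by exact_mod_cast k.factorial_ne_zero
  rw [h]
  push_cast
  field_simp
  ring

lemma fpol_sum (p : ℕ) (x : ℂ) :
    fpol p x = ∑ k ∈ Finset.range (p + 1), (((p:ℂ) + 1) - (k:ℂ)) * x ^ k / (k.factorial : ℂ) := by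
  cases p with
  | zero => simp [fpol, epol]
  | succ q =>
    rw [fpol, if_neg (Nat.succ_ne_zero q), Nat.succ_sub_one, epol, epol, ← aux_sum (q+1) x,
      Finset.mul_sum, ← Finset.sum_sub_distrib]
    refine Finset.sum_congr rfl fun k _ => ?_
    push_cast
    ring

lemma fpol_ofReal (p : ℕ) (t : ℝ) :
    fpol p ((t : ℝ) : ℂ) =
      ((∑ k ∈ Finset.range (p + 1), (((p:ℝ) + 1) - (k:ℝ)) * t ^ k / (k.factorial : ℝ) : ℝ) : ℂ) := by
  rw [fpol_sum]
  push_cast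
  rfl

lemma fpolR_pos (p : ℕ) {t : ℝ} (ht : 0 ≤ t) :
    0 < ∑ k ∈ Finset.range (p + 1), (((p:ℝ) + 1) - (k:ℝ)) * t ^ k / (k.factorial : ℝ) := by
  refine Finset.sum_pos' (fun k hk => ?_) ⟨0, Finset.mem_range.2 (Nat.succ_pos p), ?_⟩
  · have hk' : (k:ℝ) ≤ p := by
      have := Finset.mem_range.1 hk; exact_mod_cast Nat.lt_succ_iff.1 this
    have h1 : (0:ℝ) ≤ ((p:ℝ) + 1) - k := by linarith
    have h2 : (0:ℝ) < k.factorial := by exact_mod_cast k.factorial_pos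
    positivity
  · norm_num
    exact_mod_cast Nat.succ_pos p

lemma fpol_rec (a : ℕ) (x : ℂ) :
    (x + (a:ℂ) + 3) * fpol (a + 1) x = ((a:ℂ) + 2) * fpol (a + 2) x + x * fpol a x := by
  have h3 : (a.factorial : ℂ) ≠ 0 := by exact_mod_cast a.factorial_ne_zero
  have h4 : ((a:ℂ) + 1) ≠ 0 := Nat.cast_add_one_ne_zero a
  have h5 : ((a:ℂ) + 2) ≠ 0 := by
    have : ((a:ℂ) + 2) = ((a + 2 : ℕ) : ℂ) := by push_cast; ring
    rw [this]
    exact_mod_cast Nat.succ_ne_zero (a + 1)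
  have h1 : ((a+1).factorial : ℂ) = ((a:ℂ) + 1) * (a.factorial : ℂ) := by
    push_cast [Nat.factorial_succ]; ring
  have h2 : ((a+2).factorial : ℂ) = ((a:ℂ) + 2) * (((a:ℂ) + 1) * (a.factorial : ℂ)) := by
    rw [show a + 2 = (a+1)+1 from rfl, Nat.factorial_succ]
    push_cast [h1]; ring
  have hDne : ((a:ℂ) + 2) * (((a:ℂ) + 1) * (a.factorial : ℂ)) ≠ 0 :=
    mul_ne_zero h5 (mul_ne_zero h4 h3)
  have e1 : epol (a+1) x = epol a x +
      x ^ (a+1) * ((a:ℂ) + 2) * (((a:ℂ) + 2) * (((a:ℂ) + 1) * (a.factorial : ℂ)))⁻¹ := by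
    rw [epol_succ, h1]
    field_simp
  have e2 : epol (a+2) x = epol a x +
      x ^ (a+1) * ((a:ℂ) + 2) * (((a:ℂ) + 2) * (((a:ℂ) + 1) * (a.factorial : ℂ)))⁻¹ +
      x ^ (a+2) * (((a:ℂ) + 2) * (((a:ℂ) + 1) * (a.factorial : ℂ)))⁻¹ := by
    have h6 : epol (a+2) x = epol (a+1) x + x ^ (a+2) / ((a+2).factorial : ℂ) := by
      rw [show a + 2 = (a+1)+1 from rfl, epol_succ]
    rw [h6, e1, h2, div_eq_mul_inv]
  have f0 : fpol a x = ((a:ℂ) + 1 - x) * epol a x +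
      x ^ (a+1) * (((a:ℂ) + 2) * ((a:ℂ) + 1)) *
        (((a:ℂ) + 2) * (((a:ℂ) + 1) * (a.factorial : ℂ)))⁻¹ := by
    rw [fpol_eq_epol]
    field_simp
  have f1 : fpol (a+1) x = ((a:ℂ) + 2 - x) * epol (a+1) x +
      x ^ (a+2) * ((a:ℂ) + 2) * (((a:ℂ) + 2) * (((a:ℂ) + 1) * (a.factorial : ℂ)))⁻¹ := by
    rw [fpol_eq_epol, h1]
    push_cast
    field_simp
    ring
  have f2 : fpol (a+2) x = ((a:ℂ) + 3 - x) * epol (a+2) x +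
      x ^ (a+3) * (((a:ℂ) + 2) * (((a:ℂ) + 1) * (a.factorial : ℂ)))⁻¹ := by
    rw [fpol_eq_epol, h2, div_eq_mul_inv]
    push_cast
    ring
  rw [f1, f2, f0, e2, e1]
  ring

lemma fpol_conj (l : ℂ) (p : ℕ) :
    conj (fpol p (l * conj l)) = fpol p (l * conj l) := by
  rw [Complex.mul_conj, fpol_ofReal, Complex.conj_ofReal]

lemma fpol_ne_zero (l : ℂ) (p : ℕ) : fpol p (l * conj l) ≠ 0 := by
  rw [Complex.mul_conj, fpol_ofReal]
  exact_mod_cast (fpolR_pos p (Complex.normSq_nonneg l)).ne'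

lemma fpol_zero' (x : ℂ) : fpol 0 x = 1 := by simp [fpol, epol]

lemma fpol_one' (x : ℂ) : fpol 1 x = x + 2 := by
  simp [fpol, epol, Finset.sum_range_succ]
  ring

lemma AB0 (l : ℂ) : Aq l 0 = Bq l 0 := by
  simp [Aq, Bq, fpol_zero', fpol_one']

lemma AB (l : ℂ) (a : ℕ) : Aq l (a+1) = Bq l (a+1) + (l * conj l) * Bq l a := by
  have h2 : ((a+2).factorial : ℂ) = ((a:ℂ) + 2) * ((a+1).factorial : ℂ) := by
    rw [show a + 2 = (a+1)+1 from rfl, Nat.factorial_succ]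
    push_cast; ring
  simp only [Aq, Bq, show a + 1 + 1 = a + 2 from rfl, h2]
  push_cast
  linear_combination (((a+1).factorial : ℂ) * fpol (a+1) (l * conj l)) *
    fpol_rec a (l * conj l)

lemma keysum (l : ℂ) (i j m : ℕ) (hmi : m ≤ i) (hmj : m ≤ j) :
    ∑ a ∈ Finset.range (m+1), tW l i j a * Aq l a =
      ∑ a ∈ Finset.range (m+1), tW l i j a * Bq l a +
      ∑ a ∈ Finset.range m, tW l i j a * Bq l a := by
  rw [Finset.sum_range_succ' (fun a => tW l i j a * Aq l a) m,
    Finset.sum_range_succ' (fun a => tW l i j a * Bq l a) m]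
  have step : ∀ a ∈ Finset.range m,
      tW l i j (a+1) * Aq l (a+1) =
        tW l i j (a+1) * Bq l (a+1) + tW l i j a * Bq l a := by
    intro a ha
    have haim : a < i := lt_of_lt_of_le (Finset.mem_range.1 ha) hmi
    have hajm : a < j := lt_of_lt_of_le (Finset.mem_range.1 ha) hmj
    have ht : tW l i j (a+1) * (l * conj l) = tW l i j a := by
      simp only [tW]
      have e1 : i - (a+1) + 1 = i - a := by omega
      have e2 : j - (a+1) + 1 = j - a := by omega
      calc (conj l) ^ (i - (a+1)) * l ^ (j - (a+1)) * (l * conj l)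
          = ((conj l) ^ (i - (a+1)) * conj l) * (l ^ (j - (a+1)) * l) := by ring
        _ = (conj l) ^ (i - (a+1) + 1) * l ^ (j - (a+1) + 1) := by
            rw [pow_succ, pow_succ]
        _ = (conj l) ^ (i - a) * l ^ (j - a) := by rw [e1, e2]
    rw [AB]
    calc tW l i j (a+1) * (Bq l (a+1) + l * conj l * Bq l a)
        = tW l i j (a+1) * Bq l (a+1) + (tW l i j (a+1) * (l * conj l)) * Bq l a := by ring
      _ = tW l i j (a+1) * Bq l (a+1) + tW l i j a * Bq l a := by rw [ht]
  rw [Finset.sum_congr rfl step, Finset.sum_add_distrib, AB0]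
  ring

lemma rint (m n : ℕ) : Finset.range m ∩ Finset.range n = Finset.range (min m n) := by
  ext k; simp [Finset.mem_range, Nat.lt_min]

lemma pointwise (l : ℂ) (i j : ℕ) (z : ℂ) :
    (1 / (Real.pi : ℂ)) * (1 + (z - l) * (conj z - conj l)) * Complex.exp (-(z * conj z)) *
        conj (Ppoly l i z) * Ppoly l j z =
      ∑ a ∈ Finset.range (i+1), ∑ b ∈ Finset.range (j+1),
        qc l i a * pc l j b * ((1 / (Real.pi : ℂ)) *
          ((1 + l * conj l) * gfun a b z + gfun (a+1) (b+1) z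
            - conj l * gfun a (b+1) z - l * gfun (a+1) b z)) := by
  rw [Ppoly, Ppoly, map_sum]
  simp only [Finset.mul_sum, Finset.sum_mul]
  rw [Finset.sum_comm]
  refine Finset.sum_congr rfl fun a _ => ?_
  refine Finset.sum_congr rfl fun b _ => ?_
  simp only [map_mul, map_pow, map_div₀, fpol_conj]
  simp only [qc, pc, gfun]
  ring

end S15
/-- bi-orthogonality of the polynomials `P_k` in the complex plane. -/
theorem statement15 (l : ℂ) (i j : ℕ) :
    ∫ z : ℂ, (1 / (Real.pi : ℂ)) * (1 + (z - l) * (conj z - conj l)) *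
        Complex.exp (-(z * conj z)) * conj (Ppoly l i z) * Ppoly l j z =
      (if i = j then 1 else 0) * (Nat.factorial (i + 1) : ℂ) *
        fpol (i + 1) (l * conj l) / fpol i (l * conj l) := by
  classical
  have hπ : ((Real.pi : ℝ) : ℂ) ≠ 0 := by exact_mod_cast Real.pi_ne_zero
  have hint : ∀ (d : ℂ) (a b : ℕ), Integrable (fun z : ℂ => d * ((1 / (Real.pi : ℂ)) *
      ((1 + l * conj l) * S15.gfun a b z + S15.gfun (a+1) (b+1) z
        - conj l * S15.gfun a (b+1) z - l * S15.gfun (a+1) b z))) := by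
    intro d a b
    apply Integrable.const_mul
    apply Integrable.const_mul
    exact ((((S15.integ_g a b).const_mul _).add (S15.integ_g (a+1) (b+1))).sub
      ((S15.integ_g a (b+1)).const_mul _)).sub ((S15.integ_g (a+1) b).const_mul _)
  simp_rw [S15.pointwise l i j]
  rw [integral_finset_sum _ (fun a _ => integrable_finset_sum _ (fun b _ => hint _ a b))]
  rw [Finset.sum_congr rfl (fun a (_ : a ∈ Finset.range (i+1)) =>
    integral_finset_sum _ (fun b _ => hint _ a b))]
  have h2 : ∀ (d : ℂ) (a b : ℕ), (∫ z : ℂ, d * ((1 / (Real.pi : ℂ)) *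
      ((1 + l * conj l) * S15.gfun a b z + S15.gfun (a+1) (b+1) z
        - conj l * S15.gfun a (b+1) z - l * S15.gfun (a+1) b z)))
      = d * ((1 / (Real.pi : ℂ)) *
        ((1 + l * conj l) * (if a = b then (Real.pi : ℂ) * (a.factorial : ℂ) else 0)
          + (if a+1 = b+1 then (Real.pi : ℂ) * ((a+1).factorial : ℂ) else 0)
          - conj l * (if a = b+1 then (Real.pi : ℂ) * (a.factorial : ℂ) else 0)
          - l * (if a+1 = b then (Real.pi : ℂ) * ((a+1).factorial : ℂ) else 0))) := by
    intro d a b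
    have iA : Integrable (fun z : ℂ => (1 + l * conj l) * S15.gfun a b z) :=
      (S15.integ_g a b).const_mul _
    have iB : Integrable (fun z : ℂ => S15.gfun (a+1) (b+1) z) := S15.integ_g (a+1) (b+1)
    have iC : Integrable (fun z : ℂ => conj l * S15.gfun a (b+1) z) :=
      (S15.integ_g a (b+1)).const_mul _
    have iD : Integrable (fun z : ℂ => l * S15.gfun (a+1) b z) :=
      (S15.integ_g (a+1) b).const_mul _
    have iAB : Integrable (fun z : ℂ =>
        (1 + l * conj l) * S15.gfun a b z + S15.gfun (a+1) (b+1) z) := iA.add iB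
    have iABC : Integrable (fun z : ℂ =>
        (1 + l * conj l) * S15.gfun a b z + S15.gfun (a+1) (b+1) z
          - conj l * S15.gfun a (b+1) z) := iAB.sub iC
    rw [integral_const_mul, integral_const_mul, integral_sub iABC iD,
      integral_sub iAB iC, integral_add iA iB, integral_const_mul,
      integral_const_mul, integral_const_mul, S15.moment, S15.moment, S15.moment, S15.moment]
  rw [Finset.sum_congr rfl (fun a (_ : a ∈ Finset.range (i+1)) =>
    Finset.sum_congr rfl (fun b _ => h2 _ a b))]
  have h3 : ∀ a b : ℕ, (1 / (Real.pi : ℂ)) *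
        ((1 + l * conj l) * (if a = b then (Real.pi : ℂ) * (a.factorial : ℂ) else 0)
          + (if a+1 = b+1 then (Real.pi : ℂ) * ((a+1).factorial : ℂ) else 0)
          - conj l * (if a = b+1 then (Real.pi : ℂ) * (a.factorial : ℂ) else 0)
          - l * (if a+1 = b then (Real.pi : ℂ) * ((a+1).factorial : ℂ) else 0))
      = (if a = b then (a.factorial : ℂ) * (l * conj l + a + 2) else 0)
        - (if a = b+1 then conj l * (a.factorial : ℂ) else 0)
        - (if a+1 = b then l * ((a+1).factorial : ℂ) else 0) := by
    intro a b
    simp only [add_left_inj]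
    split_ifs with c1 c2 c3 <;>
      first
        | (exfalso; omega)
        | (push_cast [Nat.factorial_succ]; field_simp; ring)
        | (field_simp)
  simp only [h3, mul_sub]
  simp only [Finset.sum_sub_distrib]
  simp only [mul_ite, mul_zero]
  have HX : (∑ a ∈ Finset.range (i+1), ∑ b ∈ Finset.range (j+1),
        (if a = b then S15.qc l i a * S15.pc l j b * ((a.factorial : ℂ) * (l * conj l + a + 2)) else 0))
      = ∑ a ∈ Finset.range (min (i+1) (j+1)),
          S15.tW l i j a * S15.Aq l a * ((fpol i (l * conj l) * fpol j (l * conj l)))⁻¹ := by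
    calc _ = ∑ a ∈ Finset.range (i+1),
          (if a ∈ Finset.range (j+1) then
            S15.qc l i a * S15.pc l j a * ((a.factorial : ℂ) * (l * conj l + a + 2)) else 0) :=
            Finset.sum_congr rfl fun a _ => Finset.sum_ite_eq (Finset.range (j+1)) a _
      _ = ∑ a ∈ Finset.range (i+1) ∩ Finset.range (j+1),
            S15.qc l i a * S15.pc l j a * ((a.factorial : ℂ) * (l * conj l + a + 2)) :=
            Finset.sum_ite_mem _ _ _
      _ = _ := by
            rw [S15.rint]
            refine Finset.sum_congr rfl fun a _ => ?_
            simp only [S15.qc, S15.pc, S15.tW, S15.Aq]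
            ring
  have HY : (∑ a ∈ Finset.range (i+1), ∑ b ∈ Finset.range (j+1),
        (if a = b+1 then S15.qc l i a * S15.pc l j b * (conj l * (a.factorial : ℂ)) else 0))
      = ∑ b ∈ Finset.range (min (j+1) i),
          S15.tW l i j b * S15.Bq l b * ((fpol i (l * conj l) * fpol j (l * conj l)))⁻¹ := by
    rw [Finset.sum_comm]
    calc _ = ∑ b ∈ Finset.range (j+1),
          (if b+1 ∈ Finset.range (i+1) then
            S15.qc l i (b+1) * S15.pc l j b * (conj l * (((b+1).factorial : ℂ))) else 0) :=
            Finset.sum_congr rfl fun b _ => Finset.sum_ite_eq' (Finset.range (i+1)) (b+1) _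
      _ = ∑ b ∈ Finset.range (j+1),
          (if b ∈ Finset.range i then
            S15.qc l i (b+1) * S15.pc l j b * (conj l * (((b+1).factorial : ℂ))) else 0) := by
            refine Finset.sum_congr rfl fun b _ => ?_
            congr 1
            simp [Finset.mem_range]
      _ = ∑ b ∈ Finset.range (j+1) ∩ Finset.range i,
            S15.qc l i (b+1) * S15.pc l j b * (conj l * (((b+1).factorial : ℂ))) :=
            Finset.sum_ite_mem _ _ _
      _ = _ := by
            rw [S15.rint]
            refine Finset.sum_congr rfl fun b hb => ?_
            have hbi : b < i := by
              have := Finset.mem_range.1 hb; omega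
            simp only [S15.qc, S15.pc, S15.tW, S15.Bq]
            have e1 : (conj l) ^ (i - b) = (conj l) ^ (i - (b+1)) * conj l := by
              rw [← pow_succ]; congr 1; omega
            rw [e1]
            ring
  have HZ : (∑ a ∈ Finset.range (i+1), ∑ b ∈ Finset.range (j+1),
        (if a+1 = b then S15.qc l i a * S15.pc l j b * (l * ((a+1).factorial : ℂ)) else 0))
      = ∑ a ∈ Finset.range (min (i+1) j),
          S15.tW l i j a * S15.Bq l a * ((fpol i (l * conj l) * fpol j (l * conj l)))⁻¹ := by
    calc _ = ∑ a ∈ Finset.range (i+1),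
          (if a+1 ∈ Finset.range (j+1) then
            S15.qc l i a * S15.pc l j (a+1) * (l * ((a+1).factorial : ℂ)) else 0) :=
            Finset.sum_congr rfl fun a _ => Finset.sum_ite_eq (Finset.range (j+1)) (a+1) _
      _ = ∑ a ∈ Finset.range (i+1),
          (if a ∈ Finset.range j then
            S15.qc l i a * S15.pc l j (a+1) * (l * ((a+1).factorial : ℂ)) else 0) := by
            refine Finset.sum_congr rfl fun a _ => ?_
            congr 1
            simp [Finset.mem_range]
      _ = ∑ a ∈ Finset.range (i+1) ∩ Finset.range j,
            S15.qc l i a * S15.pc l j (a+1) * (l * ((a+1).factorial : ℂ)) :=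
            Finset.sum_ite_mem _ _ _
      _ = _ := by
            rw [S15.rint]
            refine Finset.sum_congr rfl fun a ha => ?_
            have haj : a < j := by
              have := Finset.mem_range.1 ha; omega
            simp only [S15.qc, S15.pc, S15.tW, S15.Bq]
            have e1 : l ^ (j - a) = l ^ (j - (a+1)) * l := by
              rw [← pow_succ]; congr 1; omega
            rw [e1]
            ring
  rw [HX, HY, HZ, ← Finset.sum_mul, ← Finset.sum_mul, ← Finset.sum_mul]
  have hne_i := S15.fpol_ne_zero l i
  have hne_j := S15.fpol_ne_zero l j
  rcases Nat.lt_trichotomy i j with hij | hij | hij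
  · rw [show min (i+1) (j+1) = i+1 by omega, show min (j+1) i = i by omega,
      show min (i+1) j = i+1 by omega,
      S15.keysum l i j i le_rfl (le_of_lt hij), if_neg (Nat.ne_of_lt hij)]
    ring
  · subst hij
    rw [show min (i+1) (i+1) = i+1 by omega, show min (i+1) i = i by omega,
      S15.keysum l i i i le_rfl le_rfl, Finset.sum_range_succ, if_pos rfl]
    have ht : S15.tW l i i i = 1 := by simp [S15.tW]
    rw [ht, one_mul]
    simp only [S15.Bq]
    field_simp
    ring
  · rw [show min (i+1) (j+1) = j+1 by omega, show min (j+1) i = j+1 by omega,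
      show min (i+1) j = j by omega,
      S15.keysum l i j j (le_of_lt hij) le_rfl, if_neg (by omega : ¬ i = j)]
    ring
end

section
/- Let n ≥ 1, let λ, μ ∈ ℂ, set x = λμ, and assume f_m(x) ≠ 0 for all 0 ≤ m ≤ n−1. Define n×n complex matrices indexed by 0 ≤ p,q ≤ n−1: M_{pq} = p!·( δ_{pq}·(2+x+p) − δ_{p+1,q}·λ·(p+1) − δ_{p,q+1}·μ ); L_{pq} = δ_{pq} − μ·( f_{p−1}(x)/f_p(x) )·δ_{p,q+1}; D_{pq} = δ_{pq}·(p+1)!·f_{p+1}(x)/f_p(x); U_{pq} = δ_{pq} − λ·( f_p(x)/f_{p+1}(x) )·δ_{q,p+1}. Then M = L·D·U; i.e. L, D, U give the LDU decomposition of the tridiagonal moment matrix M, with L unit lower bidiagonal, U unit upper bidiagonal and D diagonal. -/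
open ComplexConjugate Filter MeasureTheory Topology

lemma epol_succ (p : ℕ) (x : ℂ) :
    epol (p + 1) x = epol p x + x ^ (p + 1) / (Nat.factorial (p + 1) : ℂ) := by
  simp [epol, Finset.sum_range_succ]

lemma cast_fact_ne (p : ℕ) : (Nat.factorial p : ℂ) ≠ 0 :=
  Nat.cast_ne_zero.2 (Nat.factorial_ne_zero _)

lemma hc_aux (p : ℕ) (x : ℂ) :
    x * (x ^ (p + 1) / (Nat.factorial (p + 1) : ℂ)) =
      ((p : ℂ) + 2) * (x ^ (p + 2) / (Nat.factorial (p + 2) : ℂ)) := by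
  have h2 : (Nat.factorial (p + 2) : ℂ) = ((p : ℂ) + 2) * (Nat.factorial (p + 1) : ℂ) := by
    rw [show p + 2 = (p + 1) + 1 from rfl, Nat.factorial_succ, Nat.cast_mul]; push_cast; ring
  have h2' : ((p : ℂ) + 2) ≠ 0 := by
    have : ((p + 2 : ℕ) : ℂ) ≠ 0 := Nat.cast_ne_zero.2 (by omega)
    push_cast at this; exact this
  rw [h2]
  rw [show x ^ (p + 2) = x ^ (p + 1) * x by ring]
  field_simp [cast_fact_ne]

lemma fpol_rec (q : ℕ) (x : ℂ) :
    ((q : ℂ) + 2) * fpol (q + 2) x + x * fpol q x = ((q : ℂ) + 3 + x) * fpol (q + 1) x := by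
  rcases q with _ | r
  · simp only [fpol, Nat.cast_zero]
    simp [epol, Finset.sum_range_succ, Nat.factorial]
    ring
  · have E1 := epol_succ r x
    have E2 : epol (r + 2) x = epol (r + 1) x + x ^ (r + 2) / (Nat.factorial (r + 2) : ℂ) :=
      epol_succ (r + 1) x
    have E3 : epol (r + 3) x = epol (r + 2) x + x ^ (r + 3) / (Nat.factorial (r + 3) : ℂ) :=
      epol_succ (r + 2) x
    have hc1 := hc_aux r x
    have hc2 : x * (x ^ (r + 2) / (Nat.factorial (r + 2) : ℂ)) =
        ((r : ℂ) + 3) * (x ^ (r + 3) / (Nat.factorial (r + 3) : ℂ)) := by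
      have h := hc_aux (r + 1) x
      rw [show r + 1 + 1 = r + 2 from rfl, show r + 1 + 2 = r + 3 from rfl] at h
      push_cast at h
      linear_combination h
    simp only [fpol, Nat.succ_ne_zero, ite_false,
      show r + 1 + 2 = r + 3 from rfl, show r + 1 + 1 = r + 2 from rfl,
      show r + 3 - 1 = r + 2 from rfl, show r + 2 - 1 = r + 1 from rfl,
      show r + 1 - 1 = r from rfl]
    rw [E3, E2, E1]
    push_cast
    linear_combination x * hc1 - ((r : ℂ) + 4) * hc2

lemma fpol_zero (x : ℂ) : fpol 0 x = 1 := by simp [fpol, epol]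

lemma fpol_one (x : ℂ) : fpol 1 x = 2 + x := by
  simp [fpol, epol, Finset.sum_range_succ]
  ring

/-- LDU decomposition of the tridiagonal moment matrix. -/
theorem statement16 (n : ℕ) (hn : 1 ≤ n) (lam mu : ℂ)
    (hf : ∀ m : ℕ, m ≤ n - 1 → fpol m (lam * mu) ≠ 0) :
    (Matrix.of fun p q : Fin n =>
        (Nat.factorial p.val : ℂ) *
          ((if p = q then 1 else 0) * (2 + lam * mu + (p.val : ℂ)) -
            (if p.val + 1 = q.val then 1 else 0) * lam * ((p.val : ℂ) + 1) -
            (if p.val = q.val + 1 then 1 else 0) * mu)) =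
      (Matrix.of fun p q : Fin n =>
          (if p = q then (1 : ℂ) else 0) -
            mu * (fpol (p.val - 1) (lam * mu) / fpol p.val (lam * mu)) *
              (if p.val = q.val + 1 then 1 else 0)) *
        (Matrix.of fun p q : Fin n =>
          (if p = q then (1 : ℂ) else 0) * (Nat.factorial (p.val + 1) : ℂ) *
            fpol (p.val + 1) (lam * mu) / fpol p.val (lam * mu)) *
        (Matrix.of fun p q : Fin n =>
          (if p = q then (1 : ℂ) else 0) -
            lam * (fpol p.val (lam * mu) / fpol (p.val + 1) (lam * mu)) *
              (if q.val = p.val + 1 then 1 else 0)) := by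
  have hfne : ∀ m : ℕ, m < n → fpol m (lam * mu) ≠ 0 := fun m hm => hf m (by omega)
  ext p q
  simp only [Matrix.mul_apply, Matrix.of_apply]
  have hInner : ∀ s : Fin n,
      (∑ r : Fin n, ((if p = r then (1 : ℂ) else 0) -
          mu * (fpol (p.val - 1) (lam * mu) / fpol p.val (lam * mu)) * (if p.val = r.val + 1 then 1 else 0)) *
        ((if r = s then (1 : ℂ) else 0) * (Nat.factorial (r.val + 1) : ℂ) *
            fpol (r.val + 1) (lam * mu) / fpol r.val (lam * mu))) =
      ((if p = s then (1 : ℂ) else 0) -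
          mu * (fpol (p.val - 1) (lam * mu) / fpol p.val (lam * mu)) * (if p.val = s.val + 1 then 1 else 0)) *
        ((Nat.factorial (s.val + 1) : ℂ) * fpol (s.val + 1) (lam * mu) / fpol s.val (lam * mu)) := by
    intro s
    rw [Finset.sum_eq_single s]
    · simp
    · intro r _ hr
      simp [if_neg hr]
    · simp
  rw [Finset.sum_congr rfl fun s _ => by rw [hInner s]]
  have hsplit : ∀ s : Fin n,
      ((if p = s then (1 : ℂ) else 0) -
          mu * (fpol (p.val - 1) (lam * mu) / fpol p.val (lam * mu)) * (if p.val = s.val + 1 then 1 else 0)) *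
        ((Nat.factorial (s.val + 1) : ℂ) * fpol (s.val + 1) (lam * mu) / fpol s.val (lam * mu)) *
        ((if s = q then (1 : ℂ) else 0) -
          lam * (fpol s.val (lam * mu) / fpol (s.val + 1) (lam * mu)) * (if q.val = s.val + 1 then 1 else 0)) =
      (if p = s then (1 : ℂ) else 0) *
        (((Nat.factorial (s.val + 1) : ℂ) * fpol (s.val + 1) (lam * mu) / fpol s.val (lam * mu)) *
          ((if s = q then (1 : ℂ) else 0) -
            lam * (fpol s.val (lam * mu) / fpol (s.val + 1) (lam * mu)) * (if q.val = s.val + 1 then 1 else 0))) +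
      (if p.val = s.val + 1 then (1 : ℂ) else 0) *
        (-(mu * (fpol (p.val - 1) (lam * mu) / fpol p.val (lam * mu))) *
          (((Nat.factorial (s.val + 1) : ℂ) * fpol (s.val + 1) (lam * mu) / fpol s.val (lam * mu)) *
            ((if s = q then (1 : ℂ) else 0) -
              lam * (fpol s.val (lam * mu) / fpol (s.val + 1) (lam * mu)) * (if q.val = s.val + 1 then 1 else 0)))) := by
    intro s; ring
  rw [Finset.sum_congr rfl fun s _ => hsplit s, Finset.sum_add_distrib]
  have hS1 : ∀ g : Fin n → ℂ, (∑ s : Fin n, (if p = s then (1 : ℂ) else 0) * g s) = g p := by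
    intro g
    rw [Finset.sum_eq_single p] <;> simp +contextual [eq_comm]
  have hS2 : ∀ g : Fin n → ℂ,
      (∑ s : Fin n, (if p.val = s.val + 1 then (1 : ℂ) else 0) * g s) =
        if hp : 0 < p.val then
          g ⟨p.val - 1, Nat.lt_of_le_of_lt (Nat.sub_le _ _) p.isLt⟩ else 0 := by
    intro g
    split_ifs with hp
    · rw [Finset.sum_eq_single (⟨p.val - 1, Nat.lt_of_le_of_lt (Nat.sub_le _ _) p.isLt⟩ : Fin n)]
      · rw [if_pos (by simp; omega), one_mul]
      · intro r _ hr
        rw [if_neg, zero_mul]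
        intro hc
        exact hr (Fin.ext (by simp; omega))
      · simp
    · exact Finset.sum_eq_zero fun s _ => by rw [if_neg (by omega), zero_mul]
  rw [hS1, hS2]
  simp only [Fin.ext_iff]
  have hfact : ((Nat.factorial (p.val + 1) : ℕ) : ℂ) =
      ((p.val : ℂ) + 1) * (Nat.factorial p.val : ℂ) := by
    push_cast [Nat.factorial_succ]; ring
  have hfp : fpol p.val (lam * mu) ≠ 0 := hfne _ p.isLt
  have hqn := q.isLt
  have hpn := p.isLt
  split_ifs <;> try (exfalso; omega)
  -- 1: diagonal, p.val > 0  (recurrence case)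
  · have hp1 : 1 ≤ p.val := by omega
    have h0 : fpol (p.val - 1) (lam * mu) ≠ 0 := hfne _ (by omega)
    have hrec := fpol_rec (p.val - 1) (lam * mu)
    have e2 : p.val - 1 + 2 = p.val + 1 := by omega
    have e1 : p.val - 1 + 1 = p.val := by omega
    have ec : ((p.val - 1 : ℕ) : ℂ) = (p.val : ℂ) - 1 := by
      push_cast [Nat.cast_sub hp1]; ring
    rw [e2, e1, ec] at hrec
    rw [e1, hfact]
    field_simp
    linear_combination (-(Nat.factorial p.val : ℂ)) * hrec
  -- 2: diagonal, p.val = 0  (base case)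
  · have hp0 : p.val = 0 := by omega
    simp only [hp0]
    simp [fpol_zero, fpol_one, Nat.factorial]
  -- 3: superdiagonal, p.val > 0
  · have h2 : fpol (p.val + 1) (lam * mu) ≠ 0 := hfne _ (by omega)
    rw [hfact]
    field_simp
    ring
  -- 4: superdiagonal, p.val = 0
  · have h2 : fpol (p.val + 1) (lam * mu) ≠ 0 := hfne _ (by omega)
    rw [hfact]
    field_simp
    ring
  -- 5: subdiagonal
  · have hp1 : 1 ≤ p.val := by omega
    have e1 : p.val - 1 + 1 = p.val := by omega
    have h0 : fpol (p.val - 1) (lam * mu) ≠ 0 := hfne _ (by omega)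
    rw [e1]
    field_simp
    ring
  -- 6,7: far off-diagonal
  · ring
  · ring
end

section
/- Let N ∈ ℕ and let x, y, z ∈ ℂ satisfy x ≠ 0, y ≠ 1, z ≠ 1, yz ≠ 1, and f_k(x) ≠ 0 for all 0 ≤ k ≤ N+1. Then x² · f_{N+1}(x) · G^{(N)}(x,y,z) = ( (N+2)·𝔉_{N+2}(x,y,z) − x·𝔉_{N+1}(x,y,z) ) / ( (1−y)²·(1−z)² ). -/
open ComplexConjugate Filter MeasureTheory Topology

noncomputable section S17aux

private lemma epol_succ17 (p : ℕ) (t : ℂ) :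
    epol (p+1) t = epol p t + t^(p+1) / (Nat.factorial (p+1) : ℂ) := by
  rw [epol, Finset.sum_range_succ]; rfl

private lemma fpol_zero17 (t : ℂ) : fpol 0 t = 1 := by simp [fpol, epol]

private lemma fpol_succ17 (p : ℕ) (t : ℂ) :
    fpol (p+1) t = ((p:ℂ)+2) * epol (p+1) t - t * epol p t := by
  rw [fpol]
  simp only [Nat.succ_ne_zero, if_false, Nat.add_sub_cancel]
  push_cast; ring

private lemma fpol_rec17 (p : ℕ) (t : ℂ) :
    fpol (p+1) t = fpol p t + epol p t + t^(p+1) / (Nat.factorial (p+1) : ℂ) := by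
  cases p with
  | zero =>
    rw [fpol_succ17, fpol_zero17, epol_succ17]
    norm_num [epol]
    ring
  | succ m =>
    have ha : ((Nat.factorial (m+1) : ℕ) : ℂ) ≠ 0 := Nat.cast_ne_zero.mpr (Nat.factorial_ne_zero _)
    have hb : ((Nat.factorial (m+1+1) : ℕ) : ℂ) ≠ 0 := Nat.cast_ne_zero.mpr (Nat.factorial_ne_zero _)
    rw [fpol_succ17, fpol_succ17, epol_succ17, epol_succ17]
    field_simp
    rw [Nat.factorial_succ (m+1)]
    push_cast
    ring

private lemma Ssum17 (k : ℕ) (x y : ℂ) :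
    (∑ m ∈ Finset.range (k+1), fpol m x * y^m) * (1-y)^2
      = epol k (x*y) - y^(k+1)*(fpol k x + epol k x) + y^(k+2)*fpol k x := by
  induction k with
  | zero => simp [fpol_zero17, epol]; ring
  | succ n ih =>
    rw [Finset.sum_range_succ, add_mul, ih, epol_succ17, epol_succ17, fpol_rec17]
    ring

private lemma swap_sum17 (N : ℕ) (c d g : ℕ → ℂ) :
    ∑ m ∈ Finset.range (N+1), ∑ n ∈ Finset.range (N+1),
      c m * d n * ∑ k ∈ Finset.Icc (max m n) N, g k
    = ∑ k ∈ Finset.range (N+1),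
        (∑ m ∈ Finset.range (k+1), c m) * (∑ n ∈ Finset.range (k+1), d n) * g k := by
  induction N with
  | zero => simp
  | succ N ih =>
    have step1 : ∑ m ∈ Finset.range (N+2), ∑ n ∈ Finset.range (N+2),
        c m * d n * ∑ k ∈ Finset.Icc (max m n) (N+1), g k
        = (∑ m ∈ Finset.range (N+2), ∑ n ∈ Finset.range (N+2),
            c m * d n * ∑ k ∈ Finset.Icc (max m n) N, g k)
          + (∑ m ∈ Finset.range (N+2), c m) * (∑ n ∈ Finset.range (N+2), d n) * g (N+1) := by
      have e1 : ∑ m ∈ Finset.range (N+2), ∑ n ∈ Finset.range (N+2),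
          c m * d n * ∑ k ∈ Finset.Icc (max m n) (N+1), g k
          = ∑ m ∈ Finset.range (N+2), ∑ n ∈ Finset.range (N+2),
            (c m * d n * ∑ k ∈ Finset.Icc (max m n) N, g k + c m * d n * g (N+1)) := by
        refine Finset.sum_congr rfl fun m hm => Finset.sum_congr rfl fun n hn => ?_
        simp only [Finset.mem_range] at hm hn
        rw [Finset.sum_Icc_succ_top (by omega)]
        ring
      rw [e1]
      simp only [Finset.sum_add_distrib]
      congr 1
      rw [Finset.sum_mul_sum, Finset.sum_mul]
      exact Finset.sum_congr rfl fun m _ => by rw [Finset.sum_mul]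
    have step2 : ∑ m ∈ Finset.range (N+2), ∑ n ∈ Finset.range (N+2),
        c m * d n * ∑ k ∈ Finset.Icc (max m n) N, g k
        = ∑ m ∈ Finset.range (N+1), ∑ n ∈ Finset.range (N+1),
            c m * d n * ∑ k ∈ Finset.Icc (max m n) N, g k := by
      rw [Finset.sum_range_succ]
      have h1 : ∑ n ∈ Finset.range (N+2), c (N+1) * d n * ∑ k ∈ Finset.Icc (max (N+1) n) N, g k = 0 := by
        refine Finset.sum_eq_zero fun n _ => ?_
        rw [Finset.Icc_eq_empty (by omega)]
        simp
      rw [h1, add_zero]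
      refine Finset.sum_congr rfl fun m hm => ?_
      rw [Finset.sum_range_succ]
      rw [Finset.Icc_eq_empty (by simp only [Finset.mem_range] at hm; omega)]
      simp
    rw [step1, step2, ih]
    conv_rhs => rw [Finset.sum_range_succ]

private lemma Gker_eq17 (N : ℕ) (x y z : ℂ) :
    Gker N x y z = ∑ k ∈ Finset.range (N+1),
      (∑ m ∈ Finset.range (k+1), fpol m x * y^m) * (∑ n ∈ Finset.range (k+1), fpol n x * z^n) *
        (x^k / ((Nat.factorial (k+1) : ℂ) * fpol k x * fpol (k+1) x)) := by
  rw [Gker, ← swap_sum17]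
  exact Finset.sum_congr rfl fun m _ => Finset.sum_congr rfl fun n _ => by ring

private lemma Fg_clear17 (n : ℕ) (x y z : ℂ) (hyz : y * z ≠ 1) :
    (1-y*z) * Fgoth n x y z
      = (1-y*z) * (epol n (x*y) * epol n (x*z)
          - epol n (x*y*z) * epol n x * (1 - x*(1-y)*(1-z)))
        + ((1-y)*(1-z)/(Nat.factorial n : ℂ)) *
            ((x*y*z)^(n+1) * epol n x - x^(n+1) * epol n (x*y*z)) := by
  have hyz' : (1:ℂ) - y*z ≠ 0 := sub_ne_zero.mpr (Ne.symm hyz)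
  rw [Fgoth, mul_add]
  congr 1
  rw [mul_comm ((1-y)*(1-z)/(Nat.factorial n : ℂ)), ← mul_assoc, mul_div_cancel₀ _ hyz']
  ring

private lemma base_id17 (x y z : ℂ) (hyz : y * z ≠ 1) :
    (2:ℂ) * Fgoth 2 x y z - x * Fgoth 1 x y z = x^2 * ((1-y)^2 * (1-z)^2) := by
  have hyz' : (1:ℂ) - y*z ≠ 0 := sub_ne_zero.mpr (Ne.symm hyz)
  apply mul_left_cancel₀ hyz'
  rw [show (1-y*z)*((2:ℂ)*Fgoth 2 x y z - x*Fgoth 1 x y z)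
      = 2*((1-y*z)*Fgoth 2 x y z) - x*((1-y*z)*Fgoth 1 x y z) from by ring,
    Fg_clear17 2 x y z hyz, Fg_clear17 1 x y z hyz]
  norm_num [epol, Finset.sum_range_succ]
  ring

set_option maxHeartbeats 1000000 in
private lemma key17 (K : ℕ) (x y z : ℂ) (hyz : y * z ≠ 1) :
    fpol (K+1) x * (((K:ℂ)+1+2) * Fgoth (K+1+1+1) x y z - x * Fgoth (K+1+1) x y z)
      - fpol (K+1+1) x * (((K:ℂ)+2) * Fgoth (K+1+1) x y z - x * Fgoth (K+1) x y z)
    = x^(K+1+2) *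
        (epol (K+1) (x*y) - y^(K+1+1)*(fpol (K+1) x + epol (K+1) x) + y^(K+1+2)*fpol (K+1) x) *
        (epol (K+1) (x*z) - z^(K+1+1)*(fpol (K+1) x + epol (K+1) x) + z^(K+1+2)*fpol (K+1) x) /
        (Nat.factorial (K+1+1) : ℂ) := by
  have hyz' : (1:ℂ) - y*z ≠ 0 := sub_ne_zero.mpr (Ne.symm hyz)
  have hA : ∀ t : ℂ, t / ((Nat.factorial (K+1) : ℕ) : ℂ)
      = (((K:ℂ)+1+1)*((K:ℂ)+1+1+1)) * (t / ((Nat.factorial (K+1+1+1) : ℕ) : ℂ)) := by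
    intro t
    rw [Nat.factorial_succ (K+1+1), Nat.factorial_succ (K+1)]
    push_cast
    have hW1 : ((Nat.factorial (K+1) : ℕ) : ℂ) ≠ 0 := Nat.cast_ne_zero.mpr (Nat.factorial_ne_zero _)
    have h2 : ((K:ℂ)+1+1) ≠ 0 := by
      have : ((K+1+1 : ℕ) : ℂ) ≠ 0 := Nat.cast_ne_zero.mpr (by omega)
      push_cast at this; exact this
    have h3 : ((K:ℂ)+1+1+1) ≠ 0 := by
      have : ((K+1+1+1 : ℕ) : ℂ) ≠ 0 := Nat.cast_ne_zero.mpr (by omega)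
      push_cast at this; exact this
    field_simp
  have hB : ∀ t : ℂ, t / ((Nat.factorial (K+1+1) : ℕ) : ℂ)
      = ((K:ℂ)+1+1+1) * (t / ((Nat.factorial (K+1+1+1) : ℕ) : ℂ)) := by
    intro t
    rw [Nat.factorial_succ (K+1+1)]
    push_cast
    have hW2 : ((Nat.factorial (K+1+1) : ℕ) : ℂ) ≠ 0 := Nat.cast_ne_zero.mpr (Nat.factorial_ne_zero _)
    have h3 : ((K:ℂ)+1+1+1) ≠ 0 := by
      have : ((K+1+1+1 : ℕ) : ℂ) ≠ 0 := Nat.cast_ne_zero.mpr (by omega)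
      push_cast at this; exact this
    field_simp
  apply mul_left_cancel₀ hyz'
  rw [show (1-y*z) * (fpol (K+1) x * (((K:ℂ)+1+2) * Fgoth (K+1+1+1) x y z - x * Fgoth (K+1+1) x y z)
        - fpol (K+1+1) x * (((K:ℂ)+2) * Fgoth (K+1+1) x y z - x * Fgoth (K+1) x y z))
      = fpol (K+1) x * (((K:ℂ)+1+2) * ((1-y*z) * Fgoth (K+1+1+1) x y z)
          - x * ((1-y*z) * Fgoth (K+1+1) x y z))
        - fpol (K+1+1) x * (((K:ℂ)+2) * ((1-y*z) * Fgoth (K+1+1) x y z)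
          - x * ((1-y*z) * Fgoth (K+1) x y z)) from by ring]
  rw [Fg_clear17 (K+1+1+1) x y z hyz, Fg_clear17 (K+1+1) x y z hyz, Fg_clear17 (K+1) x y z hyz]
  simp only [epol_succ17, fpol_succ17]
  simp only [hA, hB]
  push_cast
  ring

end S17aux

/-- closed form of the reduced kernel `G^{(N)}` in terms of `𝔉_n`. -/
theorem statement17 (N : ℕ) (x y z : ℂ) (hx : x ≠ 0) (hy : y ≠ 1) (hz : z ≠ 1)
    (hyz : y * z ≠ 1) (hf : ∀ k : ℕ, k ≤ N + 1 → fpol k x ≠ 0) :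
    x ^ 2 * fpol (N + 1) x * Gker N x y z =
      (((N : ℂ) + 2) * Fgoth (N + 2) x y z - x * Fgoth (N + 1) x y z) /
        ((1 - y) ^ 2 * (1 - z) ^ 2) := by
  have hy' : (1:ℂ) - y ≠ 0 := sub_ne_zero.mpr (Ne.symm hy)
  have hz' : (1:ℂ) - z ≠ 0 := sub_ne_zero.mpr (Ne.symm hz)
  have hD : ((1:ℂ) - y)^2 * ((1:ℂ) - z)^2 ≠ 0 :=
    mul_ne_zero (pow_ne_zero _ hy') (pow_ne_zero _ hz')
  induction N with
  | zero =>
    have hf1 : fpol 1 x ≠ 0 := hf 1 (by omega)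
    have hG : Gker 0 x y z = 1 / fpol 1 x := by
      rw [Gker]
      norm_num [Finset.Icc_self, fpol_zero17]
    have hL : x ^ 2 * fpol (0+1) x * Gker 0 x y z = x^2 := by
      rw [hG]; field_simp
    rw [hL, eq_div_iff hD]
    rw [show ((0:ℕ):ℂ) + 2 = (2:ℂ) by norm_num]
    exact (base_id17 x y z hyz).symm
  | succ n ih =>
    have hfn : ∀ k : ℕ, k ≤ n + 1 → fpol k x ≠ 0 := fun k hk => hf k (by omega)
    have ih' := ih hfn
    have ha : fpol (n+1) x ≠ 0 := hf (n+1) (by omega)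
    have hb : fpol (n+1+1) x ≠ 0 := hf (n+1+1) (by omega)
    have hfac : ((Nat.factorial (n+1+1) : ℕ) : ℂ) ≠ 0 :=
      Nat.cast_ne_zero.mpr (Nat.factorial_ne_zero _)
    have hrec : Gker (n+1) x y z = Gker n x y z
        + (∑ m ∈ Finset.range (n+1+1), fpol m x * y^m)
          * (∑ m ∈ Finset.range (n+1+1), fpol m x * z^m)
          * (x^(n+1) / ((Nat.factorial (n+1+1) : ℂ) * fpol (n+1) x * fpol (n+1+1) x)) := by
      rw [Gker_eq17 (n+1), Finset.sum_range_succ, ← Gker_eq17]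
    have hrec2 : (Nat.factorial (n+1+1) : ℂ) * fpol (n+1) x * fpol (n+1+1) x * Gker (n+1) x y z
        = (Nat.factorial (n+1+1) : ℂ) * fpol (n+1) x * fpol (n+1+1) x * Gker n x y z
          + (∑ m ∈ Finset.range (n+1+1), fpol m x * y^m)
            * (∑ m ∈ Finset.range (n+1+1), fpol m x * z^m) * x^(n+1) := by
      rw [hrec]
      field_simp
    have hkey2 := (eq_div_iff hfac).mp (key17 n x y z hyz)
    have hSy := Ssum17 (n+1) x y
    have hSz := Ssum17 (n+1) x z
    have hA0 : x^2 * fpol (n+1) x * Gker n x y z * ((1 - y)^2 * (1 - z)^2)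
        = ((n:ℂ)+2) * Fgoth (n+1+1) x y z - x * Fgoth (n+1) x y z := by
      rw [show n+1+1 = n+2 from rfl]
      exact (eq_div_iff hD).mp ih'
    rw [eq_div_iff hD]
    rw [show n+1+2 = n+1+1+1 from rfl]
    push_cast
    apply mul_left_cancel₀ (mul_ne_zero ha hfac)
    linear_combination (x^2 * ((1-y)^2*(1-z)^2)) * hrec2
      + ((Nat.factorial (n+1+1) : ℂ) * fpol (n+1+1) x) * hA0
      + (x^(n+1+2) * (∑ m ∈ Finset.range (n+1+1), fpol m x * z^m) * (1-z)^2) * hSy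
      + (x^(n+1+2) * (epol (n+1) (x*y) - y^(n+1+1)*(fpol (n+1) x + epol (n+1) x)
            + y^(n+1+2)*fpol (n+1) x)) * hSz
      - hkey2
end

section
/- For every N ∈ ℕ, every x ∈ ℂ, and every y ∈ ℂ with y ≠ 1: Σ_{n=0}^N f_n(x)·y^n = e_N(yx)/(1−y)² − (yx·(yx)^N)/((1−y)·N!) − ( (N+2−x) − (N+1−x)·y )·y^{N+1}·e_N(x)/(1−y)². -/
open ComplexConjugate Filter MeasureTheory Topology

lemma fpol_succ (p : ℕ) (x : ℂ) :
    fpol (p + 1) x = ((p : ℂ) + 2) * epol (p + 1) x - x * epol p x := by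
  simp only [fpol, Nat.succ_ne_zero, if_false, Nat.add_sub_cancel]
  push_cast; ring

lemma statement18aux (N : ℕ) (x y : ℂ) :
    (1 - y) ^ 2 * (Nat.factorial N : ℂ) * ∑ n ∈ Finset.range (N + 1), fpol n x * y ^ n =
      (Nat.factorial N : ℂ) * epol N (y * x) - y * x * (y * x) ^ N * (1 - y) -
        (((N : ℂ) + 2 - x) - ((N : ℂ) + 1 - x) * y) * y ^ (N + 1) *
          (Nat.factorial N : ℂ) * epol N x := by
  induction N with
  | zero =>
    have hf : fpol 0 x = 1 := by simp [fpol, epol]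
    have he : epol 0 (y * x) = 1 := by simp [epol]
    have he2 : epol 0 x = 1 := by simp [epol]
    rw [Finset.sum_range_one, hf, he, he2]
    simp only [Nat.factorial_zero, Nat.cast_one, Nat.cast_zero]
    ring
  | succ N ih =>
    have hN1 : ((N : ℂ) + 1) ≠ 0 := by exact_mod_cast Nat.succ_ne_zero N
    have hfac : (Nat.factorial N : ℂ) ≠ 0 := Nat.cast_ne_zero.mpr (Nat.factorial_ne_zero N)
    have hD : (((N : ℂ) + 1) * (Nat.factorial N : ℂ)) ≠ 0 := mul_ne_zero hN1 hfac
    have hfac1 : ((Nat.factorial (N + 1) : ℕ) : ℂ)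
        = ((N : ℂ) + 1) * (Nat.factorial N : ℂ) := by
      push_cast [Nat.factorial_succ]; ring
    have hu : (y * x) ^ (N + 1) / (((N : ℂ) + 1) * (Nat.factorial N : ℂ)) *
        (((N : ℂ) + 1) * (Nat.factorial N : ℂ)) = (y * x) ^ (N + 1) :=
      div_mul_cancel₀ _ hD
    have hv : x ^ (N + 1) / (((N : ℂ) + 1) * (Nat.factorial N : ℂ)) *
        (((N : ℂ) + 1) * (Nat.factorial N : ℂ)) = x ^ (N + 1) :=
      div_mul_cancel₀ _ hD
    rw [Finset.sum_range_succ, fpol_succ, epol_succ, epol_succ, hfac1]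
    push_cast
    linear_combination (((N : ℂ) + 1)) * ih - hu +
      ((1 - y) ^ 2 * y ^ (N + 1) * ((N : ℂ) + 2) +
        (((N : ℂ) + 3 - x) - ((N : ℂ) + 2 - x) * y) * y ^ (N + 2)) * hv

set_option maxHeartbeats 1000000 in
/-- closed form of `α_N(x,y) = Σ_{n=0}^N f_n(x) y^n`. -/
theorem statement18 (N : ℕ) (x y : ℂ) (hy : y ≠ 1) :
    ∑ n ∈ Finset.range (N + 1), fpol n x * y ^ n =
      epol N (y * x) / (1 - y) ^ 2 -
        y * x * (y * x) ^ N / ((1 - y) * (Nat.factorial N : ℂ)) -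
        (((N : ℂ) + 2 - x) - ((N : ℂ) + 1 - x) * y) * y ^ (N + 1) * epol N x /
          (1 - y) ^ 2 := by
  have h1 : (1 : ℂ) - y ≠ 0 := sub_ne_zero.mpr (Ne.symm hy)
  have hfac : (Nat.factorial N : ℂ) ≠ 0 := Nat.cast_ne_zero.mpr (Nat.factorial_ne_zero N)
  have hD : ((1 - y) ^ 2 * (Nat.factorial N : ℂ)) ≠ 0 :=
    mul_ne_zero (pow_ne_zero 2 h1) hfac
  have key := statement18aux N x y
  have h2 : ∑ n ∈ Finset.range (N + 1), fpol n x * y ^ n =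
      ((Nat.factorial N : ℂ) * epol N (y * x) - y * x * (y * x) ^ N * (1 - y) -
        (((N : ℂ) + 2 - x) - ((N : ℂ) + 1 - x) * y) * y ^ (N + 1) *
          (Nat.factorial N : ℂ) * epol N x) / ((1 - y) ^ 2 * (Nat.factorial N : ℂ)) := by
    rw [eq_div_iff hD]
    linear_combination key
  rw [h2]
  field_simp
end
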